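/- Let μ be a finite positive Borel measure on [0,∞), let z_1,…,z_M be distinct points of the open upper half-plane ℂ⁺ = {z ∈ ℂ : Im z > 0}, and let u_1,…,u_M, v_1,…,v_M ∈ ℂ satisfy (∫_{[0,∞)} (t − z_i)⁻¹ dμ(t))·u_i = v_i for each i. Then the M×M matrix S₂ with entries (S₂)_{ij} = (z_j·conj(u_i)·v_j − conj(z_i)·conj(v_i)·u_j)/(z_j − conj(z_i)) is Hermitian positive semidefinite. -/

import Mathlib

/-!
Put `h_j t = √t u_j / (t - z_j)`. The partial fraction decomposition
`t / ((t - a)(t - b)) = a / (a - b) · 1 / (t - a) + b / (b - a) · 1 / (t - b)` with `a = conj z_i`,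
`b = z_j`, integrated against `μ` (which lives on `t ≥ 0`, where `√t ^ 2 = t`), turns `(S₂)_{ij}`
into `∫ conj (h_i t) * h_j t ∂μ`, using `F(z_j) u_j = v_j` and `F(conj z) = conj F(z)`. So `S₂` is
a Gram matrix in `L²(μ)`, hence positive semidefinite.
-/

open MeasureTheory Matrix ComplexConjugate
open scoped ComplexOrder

section GramIntegral

variable {ι α 𝕜 : Type*} [Fintype ι] [RCLike 𝕜] [MeasurableSpace α]

theorem Matrix.posSemidef_of_integral_conj_mul (μ : Measure α) (f : ι → α → 𝕜)
    (hf : ∀ i j, Integrable (fun t => conj (f i t) * f j t) μ) :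
    (Matrix.of fun i j => ∫ t, conj (f i t) * f j t ∂μ).PosSemidef := by
  rw [posSemidef_iff_dotProduct_mulVec]
  refine ⟨?_, fun x => ?_⟩
  · ext i j
    simp only [conjTranspose_apply, of_apply, RCLike.star_def, ← integral_conj, map_mul,
      RCLike.conj_conj, mul_comm]
  · have hx : ∀ i j, Integrable (fun t => conj (x i * f i t) * (x j * f j t)) μ := fun i j =>
      ((hf i j).const_mul (conj (x i) * x j)).congr
        (ae_of_all _ fun t => by simp only [map_mul]; ring)
    have hquad : star x ⬝ᵥ (of fun i j => ∫ t, conj (f i t) * f j t ∂μ) *ᵥ x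
        = ∫ t, ((‖∑ j, x j * f j t‖ ^ 2 : ℝ) : 𝕜) ∂μ := by
      calc _ = ∑ i, ∑ j, ∫ t, conj (x i * f i t) * (x j * f j t) ∂μ := by
            simp only [dotProduct, mulVec, of_apply, Finset.mul_sum, Pi.star_apply,
              RCLike.star_def]
            refine Finset.sum_congr rfl fun i _ => Finset.sum_congr rfl fun j _ => ?_
            rw [← integral_mul_const, ← integral_const_mul]
            congr 1; funext t; simp only [map_mul]; ring
        _ = ∫ t, ∑ i, ∑ j, conj (x i * f i t) * (x j * f j t) ∂μ := by
            rw [integral_finsetSum _ fun i _ => integrable_finsetSum _ fun j _ => hx i j]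
            exact Finset.sum_congr rfl fun i _ => (integral_finsetSum _ fun j _ => hx i j).symm
        _ = _ := by
            congr 1; funext t
            rw [RCLike.ofReal_pow, ← RCLike.conj_mul, map_sum, Finset.sum_mul_sum]
    rw [hquad, integral_ofReal]
    exact RCLike.ofReal_nonneg.mpr (integral_nonneg fun t => by positivity)

end GramIntegral

theorem mul_inv_sub_mul_inv_sub {K : Type*} [Field K] {a b T : K} (ha : T - a ≠ 0)
    (hb : T - b ≠ 0) (hab : a - b ≠ 0) :
    T * ((T - a)⁻¹ * (T - b)⁻¹) = a / (a - b) * (T - a)⁻¹ + b / (b - a) * (T - b)⁻¹ := by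
  have hba : b - a ≠ 0 := sub_ne_zero.mpr (sub_ne_zero.mp hab).symm
  field_simp
  ring

namespace Complex

theorem ofReal_sub_ne_zero {z : ℂ} (hz : z.im ≠ 0) (t : ℝ) : (t : ℂ) - z ≠ 0 :=
  sub_ne_zero.mpr fun h => hz (by simpa using congrArg im h.symm)

theorem conj_sub_ne_zero_of_im_pos {a b : ℂ} (ha : 0 < a.im) (hb : 0 < b.im) :
    conj a - b ≠ 0 := by
  intro h
  have := congrArg im h
  simp only [sub_im, conj_im, zero_im] at this
  linarith

end Complex

open Complex

noncomputable def cauchyTransform (μ : Measure ℝ) (z : ℂ) : ℂ :=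
  ∫ t : ℝ, ((t : ℂ) - z)⁻¹ ∂μ

theorem integrable_inv_ofReal_sub (μ : Measure ℝ) [IsFiniteMeasure μ] {z : ℂ}
    (hz : z.im ≠ 0) : Integrable (fun t : ℝ => ((t : ℂ) - z)⁻¹) μ := by
  have hcont : Continuous fun t : ℝ => ((t : ℂ) - z)⁻¹ :=
    (continuous_ofReal.sub continuous_const).inv₀ (ofReal_sub_ne_zero hz)
  refine (integrable_const |z.im|⁻¹).mono' hcont.aestronglyMeasurable (ae_of_all _ fun t => ?_)
  rw [norm_inv]
  refine inv_anti₀ (abs_pos.mpr hz) ?_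
  simpa using abs_im_le_norm ((t : ℂ) - z)

theorem cauchyTransform_conj (μ : Measure ℝ) (z : ℂ) :
    cauchyTransform μ (conj z) = conj (cauchyTransform μ z) := by
  simp only [cauchyTransform, ← integral_conj, map_inv₀, map_sub, conj_ofReal]

noncomputable def sqrtCauchyKernel (z u : ℂ) (t : ℝ) : ℂ :=
  Real.sqrt t * u / (t - z)

theorem conj_sqrtCauchyKernel_mul {a b : ℂ} (ha : a.im ≠ 0) (hb : b.im ≠ 0) (hab : conj a - b ≠ 0)
    (p q : ℂ) {t : ℝ} (ht : 0 ≤ t) :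
    conj (sqrtCauchyKernel a p t) * sqrtCauchyKernel b q t
      = conj p * q * (conj a / (conj a - b) * ((t : ℂ) - conj a)⁻¹
          + b / (b - conj a) * ((t : ℂ) - b)⁻¹) := by
  have hsqrt : (Real.sqrt t : ℂ) * Real.sqrt t = t := by
    rw [← ofReal_mul, Real.mul_self_sqrt ht]
  have hconj : (conj a).im ≠ 0 := by simpa using ha
  rw [← mul_inv_sub_mul_inv_sub (ofReal_sub_ne_zero hconj t) (ofReal_sub_ne_zero hb t) hab]
  simp only [sqrtCauchyKernel, div_eq_mul_inv, map_mul, map_inv₀, map_sub, conj_ofReal]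
  linear_combination conj p * q * (((t : ℂ) - conj a)⁻¹ * ((t : ℂ) - b)⁻¹) * hsqrt

section

variable {μ : Measure ℝ} {a b : ℂ}

theorem conj_sqrtCauchyKernel_mul_ae_eq (hμ : μ (Set.Iio 0) = 0) (ha : 0 < a.im) (hb : 0 < b.im)
    (p q : ℂ) :
    (fun t => conj (sqrtCauchyKernel a p t) * sqrtCauchyKernel b q t)
      =ᵐ[μ] fun t => conj p * q * (conj a / (conj a - b) * ((t : ℂ) - conj a)⁻¹
          + b / (b - conj a) * ((t : ℂ) - b)⁻¹) := by
  filter_upwards [measure_eq_zero_iff_ae_notMem.mp hμ] with t ht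
  exact conj_sqrtCauchyKernel_mul ha.ne' hb.ne' (conj_sub_ne_zero_of_im_pos ha hb) p q
    (not_lt.mp ht)

theorem integrable_conj_sqrtCauchyKernel_mul [IsFiniteMeasure μ] (hμ : μ (Set.Iio 0) = 0)
    (ha : 0 < a.im) (hb : 0 < b.im) (p q : ℂ) :
    Integrable (fun t => conj (sqrtCauchyKernel a p t) * sqrtCauchyKernel b q t) μ := by
  refine Integrable.congr ?_ (conj_sqrtCauchyKernel_mul_ae_eq hμ ha hb p q).symm
  refine Integrable.const_mul ?_ _
  have hconj : (conj a).im ≠ 0 := by simpa using ha.ne'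
  exact ((integrable_inv_ofReal_sub μ hconj).const_mul _).add
    ((integrable_inv_ofReal_sub μ hb.ne').const_mul _)

theorem integral_conj_sqrtCauchyKernel_mul [IsFiniteMeasure μ] (hμ : μ (Set.Iio 0) = 0)
    (ha : 0 < a.im) (hb : 0 < b.im) (p q : ℂ) :
    ∫ t, conj (sqrtCauchyKernel a p t) * sqrtCauchyKernel b q t ∂μ
      = (b * conj p * (cauchyTransform μ b * q)
          - conj a * conj (cauchyTransform μ a * p) * q) / (b - conj a) := by
  have hconj : (conj a).im ≠ 0 := by simpa using ha.ne'
  rw [integral_congr_ae (conj_sqrtCauchyKernel_mul_ae_eq hμ ha hb p q), integral_const_mul,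
    integral_add ((integrable_inv_ofReal_sub μ hconj).const_mul _)
      ((integrable_inv_ofReal_sub μ hb.ne').const_mul _),
    integral_const_mul, integral_const_mul]
  change conj p * q * (_ * cauchyTransform μ (conj a) + _ * cauchyTransform μ b) = _
  have hab := conj_sub_ne_zero_of_im_pos ha hb
  have hba : b - conj a ≠ 0 := sub_ne_zero.mpr (sub_ne_zero.mp hab).symm
  rw [cauchyTransform_conj, map_mul]
  field_simp
  ring

end

theorem stmt1_general (M : ℕ) (μ : Measure ℝ) [IsFiniteMeasure μ]
    (hμ : μ (Set.Iio 0) = 0)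
    (z : Fin M → ℂ) (him : ∀ i, 0 < (z i).im)
    (u v : Fin M → ℂ)
    (huv : ∀ i, (∫ t : ℝ, ((t : ℂ) - z i)⁻¹ ∂μ) * u i = v i) :
    (Matrix.of fun i j : Fin M =>
      (z j * (starRingEnd ℂ) (u i) * v j - (starRingEnd ℂ) (z i) * (starRingEnd ℂ) (v i) * u j) /
        (z j - (starRingEnd ℂ) (z i))).PosSemidef := by
  have hF : ∀ i, cauchyTransform μ (z i) * u i = v i := huv
  have hGram : (Matrix.of fun i j : Fin M =>
      (z j * conj (u i) * v j - conj (z i) * conj (v i) * u j) / (z j - conj (z i)))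
      = Matrix.of fun i j => ∫ t, conj (sqrtCauchyKernel (z i) (u i) t)
          * sqrtCauchyKernel (z j) (u j) t ∂μ := by
    ext i j
    rw [of_apply, of_apply, integral_conj_sqrtCauchyKernel_mul hμ (him i) (him j), hF, hF]
  rw [hGram]
  exact posSemidef_of_integral_conj_mul μ _ fun i j =>
    integrable_conj_sqrtCauchyKernel_mul hμ (him i) (him j) _ _

/-- Under the same hypotheses as Statement 0, the matrix S₂ with entries
(z_j·conj(u_i)·v_j − conj(z_i)·conj(v_i)·u_j)/(z_j − conj(z_i)) is Hermitian positive
semidefinite. -/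
theorem stmt1 (M : ℕ) (μ : Measure ℝ) [IsFiniteMeasure μ]
    (hμ : μ (Set.Iio 0) = 0)
    (z : Fin M → ℂ) (hz : Function.Injective z) (him : ∀ i, 0 < (z i).im)
    (u v : Fin M → ℂ)
    (huv : ∀ i, (∫ t : ℝ, ((t : ℂ) - z i)⁻¹ ∂μ) * u i = v i) :
    (Matrix.of fun i j : Fin M =>
      (z j * (starRingEnd ℂ) (u i) * v j - (starRingEnd ℂ) (z i) * (starRingEnd ℂ) (v i) * u j) /
        (z j - (starRingEnd ℂ) (z i))).PosSemidef :=
  stmt1_general M μ hμ z him u v huv
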